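/- Let (V,∘,[·,·]) be a Gel'fand-Dorfman bialgebra and let ∗ be the product a∗b = a∘b + b∘a. If (V,∗) is a simple Novikov-Jordan algebra, then the quadratic Lie conformal algebra R = ℂ[∂]V corresponding to (V,∘,[·,·]) is simple. -/
import Mathlib


set_option maxSynthPendingDepth 3

namespace QLCA

variable {V : Type} [AddCommGroup V] [Module ℂ V]

/-- Bilinearity over `ℂ` of a binary product. -/
def IsBilin (f : V → V → V) : Prop :=
  (∀ x y z : V, f (x + y) z = f x z + f y z) ∧
  (∀ x y z : V, f x (y + z) = f x y + f x z) ∧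
  (∀ (c : ℂ) (x y : V), f (c • x) y = c • f x y) ∧
  (∀ (c : ℂ) (x y : V), f x (c • y) = c • f x y)

/-- `(V, f)` is a Novikov algebra over `ℂ`. -/
def IsNovikov (f : V → V → V) : Prop :=
  IsBilin f ∧
  (∀ a b c : V, f (f a b) c - f a (f b c) = f (f b a) c - f b (f a c)) ∧
  (∀ a b c : V, f (f a b) c = f (f a c) b)

/-- `I` is an ideal of the Novikov algebra `(V, f)`. -/
def IsNovikovIdeal (f : V → V → V) (I : Submodule ℂ V) : Prop :=
  ∀ a ∈ I, ∀ b : V, f a b ∈ I ∧ f b a ∈ I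

/-- The Novikov algebra `(V, f)` is simple. -/
def NovikovSimple (f : V → V → V) : Prop :=
  (∃ a b : V, f a b ≠ 0) ∧
  ∀ I : Submodule ℂ V, IsNovikovIdeal f I → I = ⊥ ∨ I = ⊤

/-- `(V, f)` is a Lie algebra over `ℂ`. -/
def IsLieBracket (f : V → V → V) : Prop :=
  IsBilin f ∧
  (∀ a b : V, f a b = - f b a) ∧
  (∀ a b c : V, f a (f b c) = f (f a b) c + f b (f a c))

/-- The Gel'fand-Dorfman compatibility condition between a Novikov product and
a Lie bracket. -/
def GDcompat (mul lie : V → V → V) : Prop :=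
  ∀ a b c : V,
    lie (mul a b) c - lie (mul a c) b + mul (lie a b) c - mul (lie a c) b
      - mul a (lie b c) = 0

/-- `(V, mul, lie)` is a Gel'fand-Dorfman bialgebra. -/
def IsGD (mul lie : V → V → V) : Prop :=
  IsNovikov mul ∧ IsLieBracket lie ∧ GDcompat mul lie

/-- `I` is a Gel'fand-Dorfman ideal of `(V, mul, lie)`. -/
def IsGDIdeal (mul lie : V → V → V) (I : Submodule ℂ V) : Prop :=
  IsNovikovIdeal mul I ∧ ∀ a ∈ I, ∀ b : V, lie a b ∈ I ∧ lie b a ∈ I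

/-- The symmetrized (Novikov-Jordan) product `a ∗ b = a∘b + b∘a`. -/
def sProd (mul : V → V → V) (a b : V) : V := mul a b + mul b a

/-- `I` is an ideal of the Novikov-Jordan algebra `(V, ∗)`. -/
def IsNJIdeal (mul : V → V → V) (I : Submodule ℂ V) : Prop :=
  ∀ a ∈ I, ∀ b : V, sProd mul a b ∈ I

/-- The Novikov-Jordan algebra `(V, ∗)` is simple. -/
def NJSimple (mul : V → V → V) : Prop :=
  (∃ a b : V, sProd mul a b ≠ 0) ∧
  ∀ I : Submodule ℂ V, IsNJIdeal mul I → I = ⊥ ∨ I = ⊤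

/-- An element of the free module `R = ℂ[∂]V`, recorded by its coefficients:
`a : Conf V` represents `∑ₘ ∂^m (a m)`. -/
abbrev Conf (V : Type) [Zero V] := ℕ →₀ V

/-- A polynomial in `λ` with coefficients in `R = ℂ[∂]V`: `P : LP V`
represents `∑ₙ λ^n (P n)`. -/
abbrev LP (V : Type) [Zero V] := ℕ →₀ (ℕ →₀ V)

/-- Multiplication by `∂` on `ℂ[∂]V`. -/
noncomputable def Dop (a : Conf V) : Conf V := Finsupp.mapDomain (· + 1) a

/-- Multiplication by `λ` on `λ`-polynomials. -/
noncomputable def lmul (P : LP V) : LP V := Finsupp.mapDomain (· + 1) P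

/-- Multiplication by `∂` on `λ`-polynomials. -/
noncomputable def dmul (P : LP V) : LP V := Finsupp.mapRange (Dop (V := V)) (by simp [Dop]) P

/-- Multiplication by `λ + ∂` on `λ`-polynomials. -/
noncomputable def ldOp (P : LP V) : LP V := lmul P + dmul P

/-- The `λ`-bracket on `R = ℂ[∂]V` obtained from the generator values `B u v`
(`u, v ∈ V`) by extension via `ℂ`-bilinearity and conformal sesquilinearity:
`[(∂^m u) λ (∂^n v)] = (-λ)^m (λ+∂)^n [u λ v]`. -/
noncomputable def qbr (B : V → V → LP V) (a b : Conf V) : LP V :=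
  Finsupp.sum a fun m am => Finsupp.sum b fun n bn =>
    ((-1 : ℂ) ^ m) • (lmul (V := V))^[m] ((ldOp (V := V))^[n] (B am bn))

/-- The substitution `λ ↦ -λ-∂` in a `λ`-polynomial
(used to express skew-symmetry `[a λ b] = -[b (-λ-∂) a]`). -/
noncomputable def nsubst (P : LP V) : LP V :=
  Finsupp.sum P fun n cn => ((-1 : ℂ) ^ n) • (ldOp (V := V))^[n] (Finsupp.single 0 cn)

/-- `I` is an ideal of `R = ℂ[∂]V` with `λ`-bracket `qbr B`: a
`ℂ[∂]`-submodule (a `ℂ`-submodule closed under `∂`) such that every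
`λ`-coefficient of `[a λ x]` lies in `I` for all `a ∈ R`, `x ∈ I`. -/
def IsConfIdeal (B : V → V → LP V) (I : Submodule ℂ (Conf V)) : Prop :=
  (∀ x ∈ I, Dop x ∈ I) ∧
  (∀ a : Conf V, ∀ x ∈ I, ∀ n : ℕ, qbr B a x n ∈ I)

/-- The conformal algebra `R = ℂ[∂]V` with `λ`-bracket `qbr B` is simple:
its `λ`-bracket is not identically zero and its only ideals are `0` and `R`. -/
def ConfSimple (B : V → V → LP V) : Prop :=
  (∃ a b : Conf V, qbr B a b ≠ 0) ∧
  ∀ I : Submodule ℂ (Conf V), IsConfIdeal B I → I = ⊥ ∨ I = ⊤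

/-- `R = ℂ[∂]V` with the `λ`-bracket `qbr B` is a Lie conformal algebra: the
bracket is `ℂ`-bilinear, satisfies conformal sesquilinearity, skew-symmetry
`[a λ b] = -[b (-λ-∂) a]`, and the Jacobi identity
`[a λ [b μ c]] = [[a λ b] (λ+μ) c] + [b μ [a λ c]]` (the latter written out by
comparing the coefficients of `λ^p μ^q` on both sides). -/
def IsLieConf (B : V → V → LP V) : Prop :=
  (∀ a b c : Conf V, qbr B (a + b) c = qbr B a c + qbr B b c) ∧
  (∀ a b c : Conf V, qbr B a (b + c) = qbr B a b + qbr B a c) ∧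
  (∀ (k : ℂ) (a b : Conf V), qbr B (k • a) b = k • qbr B a b) ∧
  (∀ (k : ℂ) (a b : Conf V), qbr B a (k • b) = k • qbr B a b) ∧
  (∀ a b : Conf V, qbr B (Dop a) b = - lmul (qbr B a b)) ∧
  (∀ a b : Conf V, qbr B a (Dop b) = ldOp (qbr B a b)) ∧
  (∀ a b : Conf V, qbr B a b = - nsubst (qbr B b a)) ∧
  (∀ a b c : Conf V, ∀ p q : ℕ,
    qbr B a (qbr B b c q) p =
      (∑ n ∈ Finset.Icc q (p + q),
        (n.choose q : ℂ) • qbr B (qbr B a b (p + q - n)) c n)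
      + qbr B b (qbr B a c p) q)

/-- Generator values of the `λ`-bracket of the quadratic Lie conformal algebra
associated to a Gel'fand-Dorfman bialgebra `(V, mul, lie)`:
`[u λ v] = ∂(v∘u) + [v,u] + λ(u∘v + v∘u)`. -/
noncomputable def gdB (mul lie : V → V → V) (u v : V) : LP V :=
  Finsupp.single 0 (Finsupp.single 1 (mul v u) + Finsupp.single 0 (lie v u))
    + Finsupp.single 1 (Finsupp.single 0 (mul u v + mul v u))

end QLCA

open QLCA

namespace QLCAAux

open Finsupp

variable {V : Type} [AddCommGroup V] [Module ℂ V]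

lemma bilin_zero_left {f : V → V → V} (h : IsBilin f) (x : V) : f 0 x = 0 := by
  have := h.2.2.1 0 0 x
  simpa using this

lemma bilin_zero_right {f : V → V → V} (h : IsBilin f) (x : V) : f x 0 = 0 := by
  have := h.2.2.2 0 x 0
  simpa using this

lemma lmul_apply_succ (P : LP V) (k : ℕ) : lmul P (k + 1) = P k := by
  unfold lmul
  exact Finsupp.mapDomain_apply (add_left_injective 1) P k

lemma ldOp_apply_succ (P : LP V) (k : ℕ) :
    ldOp P (k + 1) = P k + Dop (P (k + 1)) := by
  unfold ldOp
  rw [Finsupp.add_apply, lmul_apply_succ]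
  rfl

lemma Dop_zero : Dop (0 : Conf V) = 0 := Finsupp.mapDomain_zero

lemma Dop_single (n : ℕ) (v : V) :
    Dop (Finsupp.single n v) = Finsupp.single (n + 1) v := Finsupp.mapDomain_single

lemma ldOp_zero : ldOp (0 : LP V) = 0 := by
  unfold ldOp lmul dmul
  simp [Dop_zero]

lemma ldOp_iter_zero (n : ℕ) : (ldOp (V := V))^[n] 0 = 0 :=
  Function.iterate_fixed ldOp_zero n

/-- key top-coefficient lemma for iterates of `λ+∂`. -/
lemma ldOp_iter_top (n : ℕ) (Q : LP V) (m : ℕ) (s : Conf V)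
    (h : ∀ k, m ≤ k → Q k = if k = m then s else 0) :
    ∀ k, m + n ≤ k → (ldOp (V := V))^[n] Q k = if k = m + n then s else 0 := by
  induction n generalizing Q m with
  | zero => intro k hk; simpa using h k (by omega)
  | succ n ih =>
    intro k hk
    rw [Function.iterate_succ_apply]
    have hQ : ∀ j, m + 1 ≤ j → ldOp Q j = if j = m + 1 then s else 0 := by
      intro j hj
      obtain ⟨j', rfl⟩ : ∃ j', j = j' + 1 := ⟨j - 1, by omega⟩
      rw [ldOp_apply_succ]
      have h2 : Q (j' + 1) = 0 := by
        rw [h (j' + 1) (by omega)]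
        simp only [ite_eq_right_iff]
        intro hje; omega
      rw [h2, Dop_zero, add_zero, h j' (by omega)]
      by_cases hje : j' = m <;> simp [hje]
    have := ih (ldOp Q) (m + 1) hQ k (by omega)
    rw [this]
    by_cases hk' : k = m + (n + 1)
    · simp [hk', show m + (n+1) = m + 1 + n by omega]
    · rw [if_neg hk', if_neg (by omega)]

lemma gdB_top (mul lie : V → V → V) (u v : V) :
    ∀ k, 1 ≤ k → gdB mul lie u v k =
      if k = 1 then Finsupp.single 0 (mul u v + mul v u) else 0 := by
  intro k hk
  unfold gdB
  rw [Finsupp.add_apply, Finsupp.single_apply, Finsupp.single_apply]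
  have h0 : ¬ (0 = k) := by omega
  by_cases hk1 : k = 1
  · simp [hk1]
  · rw [if_neg h0, if_neg (by omega), if_neg hk1]
    simp

lemma gdB_zero_left (mul lie : V → V → V) (hm : IsBilin mul) (hl : IsBilin lie)
    (v : V) : gdB mul lie 0 v = 0 := by
  unfold gdB
  rw [bilin_zero_left hm, bilin_zero_right hm, bilin_zero_right hl]
  simp

/-- Key coefficient computation: for `u ∈ V` and `x ∈ R`, the coefficient of
`λ^{N+1}` in `[u λ x]` is `u ∗ x_N`, provided `x` has no components above
degree `N`. -/
lemma qbr_single_coeff (mul lie : V → V → V) (hm : IsBilin mul) (hl : IsBilin lie)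
    (u : V) (x : Conf V) (N : ℕ) (hN : ∀ n ∈ x.support, n ≤ N) :
    qbr (gdB mul lie) (Finsupp.single 0 u) x (N + 1)
      = Finsupp.single 0 (sProd mul u (x N)) := by
  unfold qbr
  rw [Finsupp.sum_single_index]
  · have hx : (x.sum fun n bn =>
        ((-1 : ℂ) ^ 0) • (lmul (V := V))^[0] ((ldOp (V := V))^[0 + n] (gdB mul lie u bn)))
        = x.sum fun n bn => (ldOp (V := V))^[n] (gdB mul lie u bn) := by
      apply Finsupp.sum_congr
      intro n _
      simp
    rw [show (fun n bn =>
        ((-1 : ℂ) ^ 0) • (lmul (V := V))^[0] ((ldOp (V := V))^[n] (gdB mul lie u bn)))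
        = fun n bn => (ldOp (V := V))^[n] (gdB mul lie u bn) by
      funext n bn; simp]
    rw [Finsupp.sum, Finsupp.finset_sum_apply]
    have hterm : ∀ n ∈ x.support,
        (ldOp (V := V))^[n] (gdB mul lie u (x n)) (N + 1)
          = if n = N then Finsupp.single 0 (sProd mul u (x n)) else 0 := by
      intro n hn
      have := ldOp_iter_top n (gdB mul lie u (x n)) 1
        (Finsupp.single 0 (mul u (x n) + mul (x n) u))
        (gdB_top mul lie u (x n)) (N + 1) (by have := hN n hn; omega)
      rw [this]
      by_cases hnN : n = N
      · subst hnN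
        rw [if_pos (by omega), if_pos rfl]
        rfl
      · rw [if_neg (by omega), if_neg hnN]
    rw [Finset.sum_congr rfl hterm, Finset.sum_ite_eq' x.support N
      (fun n => Finsupp.single 0 (sProd mul u (x n)))]
    by_cases hNs : N ∈ x.support
    · simp [hNs]
    · rw [if_neg hNs]
      have hx0 : x N = 0 := Finsupp.notMem_support_iff.mp hNs
      rw [hx0]
      simp [sProd, bilin_zero_left hm, bilin_zero_right hm]
  · rw [show (fun n bn =>
        ((-1 : ℂ) ^ 0) • (lmul (V := V))^[0] ((ldOp (V := V))^[n] (gdB mul lie 0 bn)))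
        = fun (n : ℕ) (bn : V) => (ldOp (V := V))^[n] (gdB mul lie 0 bn) by
      funext n bn; simp]
    rw [Finsupp.sum]
    apply Finset.sum_eq_zero
    intro n _
    rw [gdB_zero_left mul lie hm hl, ldOp_iter_zero]

/-- The annihilator of `V` under `∗` is a submodule. -/
def annK (mul : V → V → V) (hm : IsBilin mul) : Submodule ℂ V where
  carrier := {w | ∀ u : V, sProd mul u w = 0}
  add_mem' := by
    intro a b ha hb u
    simp only [Set.mem_setOf_eq] at ha hb ⊢
    have : sProd mul u (a + b) = sProd mul u a + sProd mul u b := by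
      simp only [sProd, hm.1, hm.2.1]
      abel
    rw [this, ha u, hb u, add_zero]
  zero_mem' := by
    intro u
    simp [sProd, bilin_zero_left hm, bilin_zero_right hm]
  smul_mem' := by
    intro c a ha u
    simp only [Set.mem_setOf_eq] at ha ⊢
    have : sProd mul u (c • a) = c • sProd mul u a := by
      simp [sProd, hm.2.2.1, hm.2.2.2, smul_add]
    rw [this, ha u, smul_zero]

end QLCAAux

open QLCAAux Finsupp

/-- if `(V,∘,[·,·])` is a Gel'fand-Dorfman bialgebra whose
Novikov-Jordan algebra `(V,∗)` is simple, then the corresponding quadratic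
Lie conformal algebra `R = ℂ[∂]V` is simple. -/
theorem stmt_8 {V : Type} [AddCommGroup V] [Module ℂ V] (mul lie : V → V → V)
    (hGD : IsGD mul lie) (hs : NJSimple mul) : ConfSimple (gdB mul lie) := by
  obtain ⟨hNov, hLie, _⟩ := hGD
  have hm : IsBilin mul := hNov.1
  have hl : IsBilin lie := hLie.1
  -- the annihilator is trivial
  have hK : annK mul hm = ⊥ := by
    rcases hs.2 (annK mul hm) (by
      intro a ha b
      have h0 : sProd mul a b = 0 := by
        have hsym : sProd mul a b = sProd mul b a := add_comm _ _
        rw [hsym]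
        exact ha b
      rw [h0]
      exact (annK mul hm).zero_mem) with h | h
    · exact h
    · exfalso
      obtain ⟨a, b, hab⟩ := hs.1
      have : b ∈ annK mul hm := h ▸ Submodule.mem_top
      exact hab (this a)
  have hann : ∀ w : V, w ≠ 0 → ∃ u : V, sProd mul u w ≠ 0 := by
    intro w hw
    by_contra hcon
    push_neg at hcon
    have : w ∈ annK mul hm := hcon
    rw [hK] at this
    exact hw this
  constructor
  · -- the bracket is not identically zero
    obtain ⟨u, v, huv⟩ := hs.1
    refine ⟨Finsupp.single 0 u, Finsupp.single 0 v, ?_⟩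
    intro h0
    have hc := qbr_single_coeff mul lie hm hl u (Finsupp.single 0 v) 0
      (by intro n hn; simpa using Finsupp.mem_support_iff.mp hn |> fun h =>
        by_contra fun hne => h (by
          rw [Finsupp.single_apply, if_neg]
          omega))
    rw [h0] at hc
    simp only [Finsupp.coe_zero, Pi.zero_apply] at hc
    rw [Finsupp.single_eq_same] at hc
    exact huv (by
      have := congrArg (fun f : Conf V => f 0) hc.symm
      simpa using this)
  · -- every nonzero ideal is everything
    intro I hI
    by_cases hbot : I = ⊥
    · exact Or.inl hbot
    right
    -- J = elements v with `single 0 v ∈ I`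
    set J : Submodule ℂ V := Submodule.comap (Finsupp.lsingle 0 : V →ₗ[ℂ] Conf V) I
      with hJdef
    have hJmem : ∀ v : V, v ∈ J ↔ Finsupp.single 0 v ∈ I := fun v => Iff.rfl
    -- J is a Novikov-Jordan ideal
    have hJideal : IsNJIdeal mul J := by
      intro v hv b
      have hcoeff := qbr_single_coeff mul lie hm hl b (Finsupp.single 0 v) 0
        (by intro n hn
            by_contra hne
            have := Finsupp.mem_support_iff.mp hn
            rw [Finsupp.single_apply, if_neg (by omega)] at this
            exact this rfl)
      rw [Finsupp.single_eq_same] at hcoeff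
      have hin : qbr (gdB mul lie) (Finsupp.single 0 b) (Finsupp.single 0 v) (0 + 1) ∈ I :=
        hI.2 (Finsupp.single 0 b) (Finsupp.single 0 v) (hJmem v |>.mp hv) (0 + 1)
      rw [hcoeff] at hin
      have hsym : sProd mul v b = sProd mul b v := add_comm _ _
      rw [hJmem, hsym]
      exact hin
    -- J is nonzero
    have hJne : J ≠ ⊥ := by
      obtain ⟨x, hxI, hx0⟩ := Submodule.exists_mem_ne_zero_of_ne_bot hbot
      have hsupp : x.support.Nonempty := Finsupp.support_nonempty_iff.mpr hx0
      set N := x.support.max' hsupp with hNdef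
      have hxN : x N ≠ 0 := Finsupp.mem_support_iff.mp (x.support.max'_mem hsupp)
      obtain ⟨u, hu⟩ := hann (x N) hxN
      have hcoeff := qbr_single_coeff mul lie hm hl u x N
        (fun n hn => x.support.le_max' n hn)
      have hin : qbr (gdB mul lie) (Finsupp.single 0 u) x (N + 1) ∈ I :=
        hI.2 (Finsupp.single 0 u) x hxI (N + 1)
      rw [hcoeff] at hin
      intro hJbot
      have : sProd mul u (x N) ∈ J := (hJmem _).mpr hin
      rw [hJbot] at this
      exact hu this
    have hJtop : J = ⊤ := (hs.2 J hJideal).resolve_left hJne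
    -- conclude I = ⊤
    have hsingle : ∀ (n : ℕ) (v : V), Finsupp.single n v ∈ I := by
      intro n
      induction n with
      | zero =>
        intro v
        have : v ∈ J := hJtop ▸ Submodule.mem_top
        exact (hJmem v).mp this
      | succ n ih =>
        intro v
        have := hI.1 (Finsupp.single n v) (ih v)
        rwa [Dop_single] at this
    rw [Submodule.eq_top_iff']
    intro x
    have hx : x = x.sum (fun n v => Finsupp.single n v) := (Finsupp.sum_single x).symm
    rw [hx, Finsupp.sum]
    exact Submodule.sum_mem I (fun n _ => hsingle n (x n))
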